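/- arXiv:2404.07077 — 2 statements merged into one kernel-verified Lean document; each statement's English description precedes it below -/
import Mathlib

section
/- Let R be a commutative ring with nilradical J and R̄ = R/J. If M̄ is an invertible alternating 2n×2n matrix over R̄ with determinant 1 (Pfaffian a unit), then there exists an invertible alternating 2n×2n matrix M over R reducing to M̄ modulo J. -/
open Matrix

section AlternatingLift

variable {ι R S : Type*} [LinearOrder ι] [AddGroup R]

/-- An entrywise lift of an alternating matrix need not be alternating, and `(B - Bᵀ) / 2` needs
`2` to be invertible; lifting only the strict upper triangle avoids both problems. -/
def alternatingLift (l : S → R) (A : Matrix ι ι S) : Matrix ι ι R :=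
  fun i j => if i < j then l (A i j) else if j < i then -l (A j i) else 0

theorem alternatingLift_transpose (l : S → R) (A : Matrix ι ι S) :
    (alternatingLift l A)ᵀ = -alternatingLift l A := by
  ext i j
  rcases lt_trichotomy i j with h | rfl | h
  · simp [alternatingLift, h, h.not_gt]
  · simp [alternatingLift]
  · simp [alternatingLift, h, h.not_gt]

theorem alternatingLift_apply_self (l : S → R) (A : Matrix ι ι S) (i : ι) :
    alternatingLift l A i i = 0 := by
  simp [alternatingLift]

variable {F : Type*} [AddGroup S] [FunLike F R S] [AddMonoidHomClass F R S]

theorem alternatingLift_map {f : F} {l : S → R} (hl : Function.RightInverse l f)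
    {A : Matrix ι ι S} (halt : Aᵀ = -A) (hdiag : ∀ i, A i i = 0) :
    (alternatingLift l A).map f = A := by
  ext i j
  have hji : A j i = -A i j := congrFun (congrFun halt i) j
  rcases lt_trichotomy i j with h | rfl | h
  · simp [alternatingLift, h, hl _]
  · simp [alternatingLift, hdiag]
  · simp [alternatingLift, h, h.not_gt, hl _, hji]

theorem exists_alternating_lift {f : F} (hf : Function.Surjective f)
    {A : Matrix ι ι S} (halt : Aᵀ = -A) (hdiag : ∀ i, A i i = 0) :
    ∃ M : Matrix ι ι R, Mᵀ = -M ∧ (∀ i, M i i = 0) ∧ M.map f = A :=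
  ⟨alternatingLift (Function.surjInv hf) A, alternatingLift_transpose _ A,
    alternatingLift_apply_self _ A,
    alternatingLift_map (Function.rightInverse_surjInv hf) halt hdiag⟩

end AlternatingLift

theorem isUnit_det_of_isUnit_det_map_mk {ι R : Type*} [Fintype ι] [DecidableEq ι] [CommRing R]
    {I : Ideal R} (hI : I ≤ Ideal.jacobson ⊥) {M : Matrix ι ι R}
    (h : IsUnit (M.map (Ideal.Quotient.mk I)).det) : IsUnit M.det := by
  have := isLocalHom_of_le_jacobson_bot I hI
  rw [← RingHom.mapMatrix_apply, ← RingHom.map_det] at h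
  exact isUnit_of_map_unit _ _ h

/-- Lifting invertible alternating matrices with determinant one along the reduction
modulo the nilradical: if `M̄` is an invertible alternating `2n × 2n` matrix with
determinant `1` over `R ⧸ nilradical R`, then there is an invertible alternating
`2n × 2n` matrix over `R` reducing to `M̄`. -/
theorem lift_alternating_matrix_mod_nilradical {R : Type*} [CommRing R] (n : ℕ)
    (M' : Matrix (Fin (2 * n)) (Fin (2 * n)) (R ⧸ nilradical R))
    (halt : M'ᵀ = -M') (hdiag : ∀ i, M' i i = 0) (hdet : M'.det = 1) :
    ∃ M : Matrix (Fin (2 * n)) (Fin (2 * n)) R,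
      Mᵀ = -M ∧ (∀ i, M i i = 0) ∧ IsUnit M.det ∧
      M.map (Ideal.Quotient.mk (nilradical R)) = M' := by
  obtain ⟨M, hMalt, hMdiag, hMmap⟩ :=
    exists_alternating_lift Ideal.Quotient.mk_surjective halt hdiag
  have hunit : IsUnit (M.map (Ideal.Quotient.mk (nilradical R))).det := by
    rw [hMmap, hdet]
    exact isUnit_one
  exact ⟨M, hMalt, hMdiag,
    isUnit_det_of_isUnit_det_map_mk Ideal.radical_le_jacobson hunit, hMmap⟩
end

section
/- Let R be a commutative ring, P a finitely generated projective R-module, J the nilradical of R. If P ⊗_R (R/J) is free of rank m over R/J, then P is free of rank m over R. -/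
open TensorProduct

/-- Let `P` be a finitely generated projective module over a commutative ring `R` and let
`J` be the nilradical of `R`. If `P ⊗_R (R ⧸ J)` is free of rank `m` over `R ⧸ J`, then `P`
is free of rank `m` over `R`. -/
theorem projective_free_of_free_mod_nilradical {R : Type*} [CommRing R]
    (P : Type*) [AddCommGroup P] [Module R P] [Module.Finite R P] [Module.Projective R P]
    (m : ℕ)
    (h : Nonempty (((R ⧸ nilradical R) ⊗[R] P) ≃ₗ[R ⧸ nilradical R]
        (Fin m → R ⧸ nilradical R))) :
    Nonempty (P ≃ₗ[R] (Fin m → R)) := by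
  classical
  set J : Ideal R := nilradical R with hJ
  have hJac : J ≤ Ideal.jacobson ⊥ := Ideal.radical_le_jacobson
  obtain ⟨e⟩ := h
  -- the R-linear equivalence P ⧸ J•⊤ ≃ Fin m → R⧸J
  let E : (P ⧸ (J • (⊤ : Submodule R P))) ≃ₗ[R] (Fin m → R ⧸ J) :=
    (TensorProduct.quotTensorEquivQuotSMul P J).symm.trans (e.restrictScalars R)
  let φ : P →ₗ[R] (Fin m → R ⧸ J) := E.toLinearMap ∘ₗ (J • (⊤ : Submodule R P)).mkQ
  have hφker : ∀ p : P, φ p = 0 ↔ p ∈ J • (⊤ : Submodule R P) := by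
    intro p
    simp only [φ, LinearMap.comp_apply, LinearEquiv.coe_coe, Submodule.mkQ_apply]
    rw [E.map_eq_zero_iff, Submodule.Quotient.mk_eq_zero]
  have hφsurj : Function.Surjective φ := by
    intro y
    obtain ⟨q, hq⟩ := (J • (⊤ : Submodule R P)).mkQ_surjective (E.symm y)
    exact ⟨q, by simp [φ, hq]⟩
  -- the projection (Fin m → R) → (Fin m → R⧸J)
  let π : (Fin m → R) →ₗ[R] (Fin m → R ⧸ J) :=
    LinearMap.pi fun i => (Algebra.linearMap R (R ⧸ J)).comp (LinearMap.proj i)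
  have hπ : ∀ (x : Fin m → R) (i : Fin m), π x i = Ideal.Quotient.mk J (x i) := fun _ _ => rfl
  have hπsurj : Function.Surjective π := by
    intro y
    refine ⟨fun i => (Ideal.Quotient.mk_surjective (y i)).choose, ?_⟩
    funext i
    rw [hπ]
    exact (Ideal.Quotient.mk_surjective (y i)).choose_spec
  have hπker : ∀ x : Fin m → R, π x = 0 → x ∈ J • (⊤ : Submodule R (Fin m → R)) := by
    intro x hx
    have hxi : ∀ i, x i ∈ J := by
      intro i
      have := congrFun hx i
      rw [hπ] at this
      exact (Ideal.Quotient.eq_zero_iff_mem).mp this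
    have : x = ∑ i : Fin m, x i • (Pi.single i 1 : Fin m → R) := by
      funext j
      simp [Pi.single_apply, Finset.sum_apply]
    rw [this]
    exact Submodule.sum_mem _ fun i _ =>
      Submodule.smul_mem_smul (hxi i) Submodule.mem_top
  -- lift φ through π using projectivity of P
  obtain ⟨g, hg⟩ := Module.projective_lifting_property π φ hπsurj
  have hgφ : ∀ p, π (g p) = φ p := fun p => LinearMap.congr_fun hg p
  -- g is surjective, by Nakayama
  have hgsurj : Function.Surjective g := by
    rw [← LinearMap.range_eq_top]
    have hle : (⊤ : Submodule R (Fin m → R)) ≤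
        LinearMap.range g ⊔ J • (⊤ : Submodule R (Fin m → R)) := by
      intro x _
      obtain ⟨p, hp⟩ := hφsurj (π x)
      have hx : x - g p ∈ J • (⊤ : Submodule R (Fin m → R)) := by
        apply hπker
        rw [map_sub, hgφ, hp, sub_self]
      have : x = g p + (x - g p) := by abel
      rw [this]
      exact Submodule.add_mem _ (Submodule.mem_sup_left ⟨p, rfl⟩)
        (Submodule.mem_sup_right hx)
    exact le_antisymm le_top
      (Submodule.le_of_le_smul_of_le_jacobson_bot Module.Finite.fg_top hJac hle)
  -- split g using projectivity of Fin m → R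
  obtain ⟨s, hs⟩ := Module.projective_lifting_property g (LinearMap.id) hgsurj
  have hgs : ∀ x, g (s x) = x := fun x => LinearMap.congr_fun hs x
  -- ker g is finitely generated
  let f : P →ₗ[R] P := LinearMap.id - s ∘ₗ g
  have hker_eq : LinearMap.ker g = LinearMap.range f := by
    ext k
    constructor
    · intro hk
      exact ⟨k, by simp [f, LinearMap.mem_ker.mp hk]⟩
    · rintro ⟨p, rfl⟩
      simp [f, hgs]
  have hkerfg : (LinearMap.ker g).FG := by
    rw [hker_eq, ← Submodule.map_top]
    exact Submodule.FG.map f Module.Finite.fg_top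
  -- ker g ⊓ range s = ⊥ and ker g ≤ J • ker g
  have hdisj : LinearMap.ker g ⊓ LinearMap.range s = ⊥ := by
    rw [eq_bot_iff]
    rintro x ⟨hx1, y, rfl⟩
    have : y = 0 := by rw [← hgs y]; exact LinearMap.mem_ker.mp hx1
    simp [this]
  have hsup : LinearMap.ker g ⊔ LinearMap.range s = ⊤ := by
    rw [eq_top_iff]
    intro p _
    have h1 : p - s (g p) ∈ LinearMap.ker g := by
      rw [LinearMap.mem_ker, map_sub, hgs, sub_self]
    have : p = (p - s (g p)) + s (g p) := by abel
    rw [this]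
    exact Submodule.add_mem _ (Submodule.mem_sup_left h1)
      (Submodule.mem_sup_right ⟨g p, rfl⟩)
  have hkerle : LinearMap.ker g ≤ J • LinearMap.ker g := by
    intro k hk
    have hkJ : k ∈ J • (⊤ : Submodule R P) := by
      rw [← hφker]
      rw [← hgφ, LinearMap.mem_ker.mp hk, map_zero]
    rw [← hsup, Submodule.smul_sup] at hkJ
    obtain ⟨a, ha, b, hb, hab⟩ := Submodule.mem_sup.mp hkJ
    have haker : a ∈ LinearMap.ker g := Submodule.smul_le_right ha
    have hbrange : b ∈ LinearMap.range s := Submodule.smul_le_right hb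
    have hbker : b ∈ LinearMap.ker g := by
      have : b = k - a := by rw [← hab]; abel
      rw [this]; exact Submodule.sub_mem _ hk haker
    have hb0 : b = 0 := by
      have : b ∈ (⊥ : Submodule R P) := hdisj ▸ Submodule.mem_inf.mpr ⟨hbker, hbrange⟩
      simpa using this
    have : k = a := by rw [← hab, hb0, add_zero]
    rw [this]; exact ha
  have hkerbot : LinearMap.ker g = ⊥ :=
    Submodule.eq_bot_of_le_smul_of_le_jacobson_bot J _ hkerfg hkerle hJac
  exact ⟨LinearEquiv.ofBijective g ⟨LinearMap.ker_eq_bot.mp hkerbot, hgsurj⟩⟩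
end
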